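/- Let A, B ∈ ℍ² with D = d(A,B) > 0, let u ∈ T_A ℍ² and v ∈ T_B ℍ², set A_t = exp_A(t u), B_t = exp_B(t v), and E(t) = (1/2) d(A_t, B_t)². Let α, β be the oriented angles between the geodesic AB and u, v respectively. Then E''(0) = a + b·D·tanh(D/2) + c·(D·coth(D) − D·tanh(D/2)), where a = (‖u‖ cos α − ‖v‖ cos β)², b = ‖u‖² sin² α + ‖v‖² sin² β, and c = (‖u‖ sin α − ‖v‖ sin β)². -/

import Mathlib

/-!
In the hyperboloid model the geodesics are `A_t = cosh (‖u‖ t) A + (sinh (‖u‖ t) / ‖u‖) u` and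
similarly `B_t`, so `E = ½ arcosh (F)²` with `F t = -⟨A_t, B_t⟩`. Since `A_t'' = ‖u‖² A_t`, the
values `F 0 = cosh D`, `F' 0 = -(⟨u, B⟩ + ⟨A, v⟩)` and `F'' 0 = (‖u‖² + ‖v‖²) cosh D - 2 ⟨u, v⟩`
are Minkowski products, and the chain rule for `½ arcosh (F)²` expresses `E'' 0` through them.
In `ℍ²` the angle data give `⟨u, B⟩ = ‖u‖ sinh D cos α` and `⟨A, v⟩ = -‖v‖ sinh D cos β`, and the
Gram identity `det (A, B, u) det (A, B, v) = sinh² D ⟨u, v⟩ + cosh D ⟨A, v⟩ ⟨u, B⟩` gives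
`⟨u, v⟩ = ‖u‖ ‖v‖ (cosh D cos α cos β + sin α sin β)`. With `tanh (D / 2) = (cosh D - 1) / sinh D`
the formula becomes an algebraic identity.
-/

noncomputable section

/-- The Minkowski bilinear form on `ℝ^{n,1}`. -/
def mink (n : ℕ) (x y : Fin (n+1) → ℝ) : ℝ :=
  (∑ i : Fin n, x i.castSucc * y i.castSucc) - x (Fin.last n) * y (Fin.last n)

/-- Membership in the hyperboloid model of hyperbolic `n`-space. -/
def IsHyp (n : ℕ) (x : Fin (n+1) → ℝ) : Prop :=
  mink n x x = -1 ∧ 0 < x (Fin.last n)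

/-- Tangency to the hyperboloid at `x`. -/
def IsTang (n : ℕ) (x v : Fin (n+1) → ℝ) : Prop := mink n x v = 0

/-- Inverse hyperbolic cosine. -/
def acosh (x : ℝ) : ℝ := Real.log (x + Real.sqrt (x ^ 2 - 1))

/-- Hyperbolic distance in the hyperboloid model: `cosh (dist x y) = -⟨x,y⟩`. -/
def hdist (n : ℕ) (x y : Fin (n+1) → ℝ) : ℝ := acosh (-(mink n x y))

/-- Norm of a tangent vector (the Minkowski form is positive definite on tangent spaces). -/
def tnorm (n : ℕ) (v : Fin (n+1) → ℝ) : ℝ := Real.sqrt (mink n v v)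

/-- The Riemannian exponential map of the hyperboloid. -/
def hexp (n : ℕ) (x v : Fin (n+1) → ℝ) : Fin (n+1) → ℝ :=
  Real.cosh (tnorm n v) • x + (Real.sinh (tnorm n v) / tnorm n v) • v

/-- Unit tangent vector at `x` pointing towards `y`. -/
def hdir (n : ℕ) (x y : Fin (n+1) → ℝ) : Fin (n+1) → ℝ :=
  (Real.sinh (hdist n x y))⁻¹ • (y + (mink n x y) • x)

/-- The inverse exponential map `exp_x⁻¹ (y)`. -/
def hlog (n : ℕ) (x y : Fin (n+1) → ℝ) : Fin (n+1) → ℝ :=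
  hdist n x y • hdir n x y

/-- Parallel transport from `T_y ℍⁿ` to `T_x ℍⁿ` along the geodesic from `y` to `x`. -/
def ptrans (n : ℕ) (x y v : Fin (n+1) → ℝ) : Fin (n+1) → ℝ :=
  v + ((mink n x v) / (1 - mink n x y)) • (x + y)

/-- Minkowski volume form on `ℝ^{2,1}`; `det3 x u w = ‖u‖‖w‖ sin θ` for tangent
vectors `u, w` at `x ∈ ℍ²`, where `θ` is the oriented angle from `u` to `w`. -/
def det3 (a b c : Fin 3 → ℝ) : ℝ :=
  a 0 * (b 1 * c 2 - b 2 * c 1) - a 1 * (b 0 * c 2 - b 2 * c 0)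
    + a 2 * (b 0 * c 1 - b 1 * c 0)

/-- `sinhc x = sinh x / x`, with `sinhc 0 = 1`. -/
def sinhc (x : ℝ) : ℝ := if x = 0 then 1 else Real.sinh x / x

open Real Filter Topology

section Minkowski

variable {n : ℕ}

theorem mink_comm (x y : Fin (n+1) → ℝ) : mink n x y = mink n y x := by
  simp only [mink, mul_comm]

theorem mink_add_left (x y z : Fin (n+1) → ℝ) :
    mink n (x + y) z = mink n x z + mink n y z := by
  simp only [mink, Pi.add_apply, add_mul, Finset.sum_add_distrib]; ring

theorem mink_smul_left (c : ℝ) (x y : Fin (n+1) → ℝ) :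
    mink n (c • x) y = c * mink n x y := by
  simp only [mink, Pi.smul_apply, smul_eq_mul, mul_sub, Finset.mul_sum, mul_assoc]

theorem mink_smul_right (c : ℝ) (x y : Fin (n+1) → ℝ) :
    mink n x (c • y) = c * mink n x y := by
  rw [mink_comm, mink_smul_left, mink_comm]

theorem hasDerivAt_mink {γ δ : ℝ → Fin (n+1) → ℝ} {γ' δ' : Fin (n+1) → ℝ} {t : ℝ}
    (hγ : HasDerivAt γ γ' t) (hδ : HasDerivAt δ δ' t) :
    HasDerivAt (fun s => mink n (γ s) (δ s)) (mink n γ' (δ t) + mink n (γ t) δ') t := by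
  have hγi := hasDerivAt_pi.1 hγ
  have hδi := hasDerivAt_pi.1 hδ
  unfold mink
  refine ((HasDerivAt.fun_sum fun (i : Fin n) _ => (hγi i.castSucc).mul (hδi i.castSucc)).sub
    ((hγi (Fin.last n)).mul (hδi (Fin.last n)))).congr_deriv ?_
  simp only [Finset.sum_add_distrib]; ring

theorem IsTang.eq_zero_of_mink_self_nonpos {x v : Fin (n+1) → ℝ} (hx : IsHyp n x)
    (hv : IsTang n x v) (h : mink n v v ≤ 0) : v = 0 := by
  obtain ⟨hxx, hxn⟩ := hx
  simp only [IsTang, mink] at hxx hv h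
  set X := ∑ i : Fin n, x i.castSucc * x i.castSucc
  set V := ∑ i : Fin n, v i.castSucc * v i.castSucc
  set P := ∑ i : Fin n, x i.castSucc * v i.castSucc
  have hCS : P ^ 2 ≤ X * V := by
    have := Finset.sum_mul_sq_le_sq_mul_sq Finset.univ (fun i : Fin n => x i.castSucc)
      (fun i => v i.castSucc)
    simp only [sq] at this ⊢
    exact this
  have hV0 : 0 ≤ V := Finset.sum_nonneg fun i _ => mul_self_nonneg _
  -- tangency makes `P = xₙ vₙ`, so Cauchy–Schwarz gives `xₙ² V ≤ (xₙ² - 1) V`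
  have hV : V = 0 := by
    have hP : P = x (Fin.last n) * v (Fin.last n) := by linarith
    have hVn := mul_le_mul_of_nonneg_left h (mul_self_nonneg (x (Fin.last n)))
    rw [hP] at hCS
    nlinarith
  have hvi : ∀ i : Fin n, v i.castSucc = 0 := fun i =>
    mul_self_eq_zero.1 ((Finset.sum_eq_zero_iff_of_nonneg fun i _ => mul_self_nonneg _).1 hV i
      (Finset.mem_univ i))
  have hvn : v (Fin.last n) = 0 := by
    simp only [P, hvi, mul_zero, Finset.sum_const_zero, zero_sub, neg_eq_zero] at hv
    exact (mul_eq_zero.1 hv).resolve_left hxn.ne'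
  funext i
  induction i using Fin.lastCases with
  | last => exact hvn
  | cast i => exact hvi i

theorem one_le_neg_mink {x y : Fin (n+1) → ℝ} (hx : IsHyp n x) (hy : IsHyp n y) :
    1 ≤ -mink n x y := by
  obtain ⟨hxx, hxn⟩ := hx
  obtain ⟨hyy, hyn⟩ := hy
  simp only [mink] at hxx hyy ⊢
  set X := ∑ i : Fin n, x i.castSucc * x i.castSucc
  set Y := ∑ i : Fin n, y i.castSucc * y i.castSucc
  set P := ∑ i : Fin n, x i.castSucc * y i.castSucc
  have hCS : P ^ 2 ≤ X * Y := by
    have := Finset.sum_mul_sq_le_sq_mul_sq Finset.univ (fun i : Fin n => x i.castSucc)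
      (fun i => y i.castSucc)
    simp only [sq] at this ⊢
    exact this
  have hX : 0 ≤ X := Finset.sum_nonneg fun i _ => mul_self_nonneg _
  have hY : 0 ≤ Y := Finset.sum_nonneg fun i _ => mul_self_nonneg _
  have h2P : 2 * P ≤ X + Y :=
    (abs_le_of_sq_le_sq' (by nlinarith [sq_nonneg (X - Y)]) (by linarith)).2
  have hsq : (1 + P) ^ 2 ≤ (x (Fin.last n) * y (Fin.last n)) ^ 2 := by nlinarith
  nlinarith [(abs_le_of_sq_le_sq' hsq (mul_pos hxn hyn).le).2]

end Minkowski

theorem Real.tanh_half_eq_cosh_sub_one_div_sinh {x : ℝ} (hx : x ≠ 0) :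
    tanh (x / 2) = (cosh x - 1) / sinh x := by
  obtain ⟨y, rfl⟩ : ∃ y, x = 2 * y := ⟨x / 2, by ring⟩
  have hy : sinh y ≠ 0 := by simpa [sinh_eq_zero] using hx
  rw [show 2 * y / 2 = y by ring, tanh_eq_sinh_div_cosh, sinh_two_mul, cosh_two_mul,
    div_eq_div_iff (cosh_pos y).ne' (mul_ne_zero (mul_ne_zero two_ne_zero hy) (cosh_pos y).ne')]
  linear_combination (-cosh y) * cosh_sq y

theorem mul_sinhc_mul {c : ℝ} (hc : c ≠ 0) (t : ℝ) :
    t * sinhc (c * t) = sinh (c * t) / c := by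
  rcases eq_or_ne t 0 with rfl | ht
  · simp
  · rw [sinhc, if_neg (mul_ne_zero hc ht)]
    field_simp

theorem mul_mul_sinhc_mul (c t : ℝ) : c * (t * sinhc (c * t)) = sinh (c * t) := by
  rcases eq_or_ne c 0 with rfl | hc
  · simp
  · rw [mul_sinhc_mul hc]
    field_simp

theorem hasDerivAt_cosh_mul (c t : ℝ) :
    HasDerivAt (fun t => cosh (c * t)) (c * sinh (c * t)) t :=
  ((hasDerivAt_id' t).const_mul c).cosh.congr_deriv (by ring)

theorem hasDerivAt_sinh_mul (c t : ℝ) :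
    HasDerivAt (fun t => sinh (c * t)) (c * cosh (c * t)) t :=
  ((hasDerivAt_id' t).const_mul c).sinh.congr_deriv (by ring)

theorem hasDerivAt_mul_sinhc_mul (c t : ℝ) :
    HasDerivAt (fun t => t * sinhc (c * t)) (cosh (c * t)) t := by
  rcases eq_or_ne c 0 with rfl | hc
  · simpa [sinhc] using hasDerivAt_id' t
  · simp_rw [mul_sinhc_mul hc]
    simpa [hc] using (hasDerivAt_sinh_mul c t).div_const c

theorem deriv_deriv_half_arcosh_sq {F F' : ℝ → ℝ} {F'' x : ℝ}
    (hF : ∀ᶠ t in 𝓝 x, HasDerivAt F (F' t) t) (hF' : HasDerivAt F' F'' x) (hx : 1 < F x) :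
    deriv (deriv fun t => 1 / 2 * arcosh (F t) ^ 2) x =
      F' x ^ 2 / (F x ^ 2 - 1)
        + arcosh (F x) * (F'' * (F x ^ 2 - 1) - F x * F' x ^ 2) / √(F x ^ 2 - 1) ^ 3 := by
  have hFx : HasDerivAt F (F' x) x := hF.self_of_nhds
  have hF1 : ∀ᶠ t in 𝓝 x, 1 < F t := continuousAt_const.eventually_lt hFx.continuousAt hx
  have hderiv : deriv (fun t => 1 / 2 * arcosh (F t) ^ 2)
      =ᶠ[𝓝 x] fun t => arcosh (F t) * (F' t / √(F t ^ 2 - 1)) := by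
    filter_upwards [hF, hF1] with t hFt h1
    refine ((((hasDerivAt_arcosh h1).comp t hFt).pow 2).const_mul (1 / 2)).deriv.trans ?_
    simp only [Function.comp_apply]
    ring
  have hs : F x ^ 2 - 1 ≠ 0 := by nlinarith
  have hs' : √(F x ^ 2 - 1) ≠ 0 := Real.sqrt_ne_zero'.2 (by nlinarith)
  have h : HasDerivAt (fun t => arcosh (F t) * (F' t / √(F t ^ 2 - 1))) _ x :=
    ((hasDerivAt_arcosh hx).comp x hFx).mul
    (hF'.div (((hFx.pow 2).sub_const 1).sqrt hs) hs')
  rw [hderiv.deriv_eq, h.deriv]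
  simp only [Function.comp_apply, Pi.pow_apply, Nat.cast_ofNat, pow_one, Nat.add_one_sub_one]
  have hs2 : F x ^ 2 - 1 = √(F x ^ 2 - 1) ^ 2 := (Real.sq_sqrt (by nlinarith)).symm
  generalize √(F x ^ 2 - 1) = s at hs' hs2 ⊢
  rw [hs2]
  field_simp

section Hyperboloid

variable {n : ℕ}

theorem tnorm_nonneg (v : Fin (n+1) → ℝ) : 0 ≤ tnorm n v := Real.sqrt_nonneg _

theorem tnorm_smul (c : ℝ) (v : Fin (n+1) → ℝ) : tnorm n (c • v) = |c| * tnorm n v := by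
  rw [tnorm, tnorm, mink_smul_left, mink_smul_right, ← mul_assoc, ← sq, ← sq_abs,
    Real.sqrt_mul (sq_nonneg _), Real.sqrt_sq (abs_nonneg _)]

theorem hexp_zero (x : Fin (n+1) → ℝ) : hexp n x 0 = x := by
  simp [hexp, tnorm, mink]

theorem one_lt_neg_mink_of_hdist_pos {x y : Fin (n+1) → ℝ} (hx : IsHyp n x) (hy : IsHyp n y)
    (hD : 0 < hdist n x y) : 1 < -mink n x y := by
  refine lt_of_le_of_ne (one_le_neg_mink hx hy) fun h => ?_
  rw [hdist, ← h] at hD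
  simp [acosh] at hD

theorem cosh_hdist {x y : Fin (n+1) → ℝ} (hx : IsHyp n x) (hy : IsHyp n y) :
    cosh (hdist n x y) = -mink n x y :=
  cosh_arcosh (one_le_neg_mink hx hy)

theorem sinh_hdist {x y : Fin (n+1) → ℝ} (hx : IsHyp n x) (hy : IsHyp n y) :
    sinh (hdist n x y) = √((-mink n x y) ^ 2 - 1) :=
  sinh_arcosh (one_le_neg_mink hx hy)

theorem hdist_comm (x y : Fin (n+1) → ℝ) : hdist n x y = hdist n y x := by
  rw [hdist, hdist, mink_comm]

theorem mink_hdir_left {x u : Fin (n+1) → ℝ} (y : Fin (n+1) → ℝ) (hu : IsTang n x u) :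
    mink n (hdir n x y) u = mink n y u / sinh (hdist n x y) := by
  rw [hdir, mink_smul_left, mink_add_left, mink_smul_left,
    show mink n x u = 0 from hu, mul_zero, add_zero, inv_mul_eq_div]

theorem hexp_smul {x v : Fin (n+1) → ℝ} (hx : IsHyp n x) (hv : IsTang n x v) (t : ℝ) :
    hexp n x (t • v) = cosh (tnorm n v * t) • x + (t * sinhc (tnorm n v * t)) • v := by
  rcases eq_or_ne (tnorm n v) 0 with hc | hc
  · obtain rfl : v = 0 := hv.eq_zero_of_mink_self_nonpos hx (Real.sqrt_eq_zero'.1 hc)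
    simp [hexp, hc]
  have hct : tnorm n (t • v) = |tnorm n v * t| := by
    rw [tnorm_smul, abs_mul, abs_of_nonneg (tnorm_nonneg v), mul_comm]
  rw [hexp, hct, cosh_abs, smul_smul]
  congr 2
  rcases eq_or_ne t 0 with rfl | ht
  · simp
  rw [sinhc, if_neg (mul_ne_zero hc ht)]
  rcases abs_cases (tnorm n v * t) with ⟨h, -⟩ | ⟨h, -⟩ <;> rw [h]
  · ring
  · rw [sinh_neg]; field_simp

theorem hasDerivAt_hexp_smul {x v : Fin (n+1) → ℝ} (hx : IsHyp n x) (hv : IsTang n x v)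
    (t : ℝ) : HasDerivAt (fun t => hexp n x (t • v))
      ((tnorm n v * sinh (tnorm n v * t)) • x + cosh (tnorm n v * t) • v) t := by
  simp_rw [hexp_smul hx hv]
  exact ((hasDerivAt_cosh_mul _ t).smul_const x).add ((hasDerivAt_mul_sinhc_mul _ t).smul_const v)

theorem hasDerivAt_geodesic_velocity (c : ℝ) (x v : Fin (n+1) → ℝ) (t : ℝ) :
    HasDerivAt (fun t => (c * sinh (c * t)) • x + cosh (c * t) • v)
      (c ^ 2 • (cosh (c * t) • x + (t * sinhc (c * t)) • v)) t := by
  refine ((((hasDerivAt_sinh_mul c t).const_mul c).smul_const x).add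
    ((hasDerivAt_cosh_mul c t).smul_const v)).congr_deriv ?_
  rw [smul_add, smul_smul, smul_smul, sq, mul_assoc c c (t * _), mul_mul_sinhc_mul, mul_assoc]

theorem deriv_deriv_half_hdist_sq_hexp {A B u v : Fin (n+1) → ℝ} (hA : IsHyp n A)
    (hB : IsHyp n B) (hu : IsTang n A u) (hv : IsTang n B v) (hD : 0 < hdist n A B) :
    deriv (deriv fun t : ℝ => 1 / 2 * hdist n (hexp n A (t • u)) (hexp n B (t • v)) ^ 2) 0 =
      (mink n u B + mink n A v) ^ 2 / sinh (hdist n A B) ^ 2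
        + hdist n A B * (((tnorm n u ^ 2 + tnorm n v ^ 2) * cosh (hdist n A B)
            - 2 * mink n u v) * sinh (hdist n A B) ^ 2
          - cosh (hdist n A B) * (mink n u B + mink n A v) ^ 2) / sinh (hdist n A B) ^ 3 := by
  have hm := one_lt_neg_mink_of_hdist_pos hA hB hD
  have hF : ∀ t, HasDerivAt (fun t => -mink n (hexp n A (t • u)) (hexp n B (t • v))) _ t :=
    fun t => (hasDerivAt_mink (hasDerivAt_hexp_smul hA hu t) (hasDerivAt_hexp_smul hB hv t)).neg
  have hF' := ((hasDerivAt_mink (hasDerivAt_geodesic_velocity (tnorm n u) A u 0)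
    (hasDerivAt_hexp_smul hB hv 0)).add (hasDerivAt_mink (hasDerivAt_hexp_smul hA hu 0)
      (hasDerivAt_geodesic_velocity (tnorm n v) B v 0))).neg
  have key := deriv_deriv_half_arcosh_sq (Eventually.of_forall hF) hF'
    (by simpa only [zero_smul, hexp_zero] using hm)
  simp only [zero_smul, hexp_zero, mul_zero, sinh_zero, cosh_zero, zero_mul, sinhc, if_true,
    one_smul, add_zero, zero_add, mink_smul_left, mink_smul_right] at key
  change deriv (deriv fun t : ℝ =>
    1 / 2 * arcosh (-mink n (hexp n A (t • u)) (hexp n B (t • v))) ^ 2) 0 = _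
  have hs2 : (-mink n A B) ^ 2 - 1 = √((-mink n A B) ^ 2 - 1) ^ 2 :=
    (Real.sq_sqrt (by nlinarith)).symm
  have hs : √((-mink n A B) ^ 2 - 1) ≠ 0 := Real.sqrt_ne_zero'.2 (by nlinarith)
  rw [show arcosh (-mink n A B) = hdist n A B from rfl] at key
  rw [key, cosh_hdist hA hB, sinh_hdist hA hB]
  generalize √((-mink n A B) ^ 2 - 1) = s at hs hs2 ⊢
  rw [hs2]
  field_simp
  ring

end Hyperboloid

theorem mink_two (x y : Fin 3 → ℝ) : mink 2 x y = x 0 * y 0 + x 1 * y 1 - x 2 * y 2 := by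
  simp [mink, Fin.sum_univ_two]

theorem det3_swap (x y z : Fin 3 → ℝ) : det3 y x z = -det3 x y z := by
  simp only [det3]; ring

theorem det3_hdir (x y u : Fin 3 → ℝ) :
    det3 x (hdir 2 x y) u = det3 x y u / sinh (hdist 2 x y) := by
  simp only [hdir, det3, Pi.smul_apply, Pi.add_apply, smul_eq_mul]; ring

theorem det3_mul_det3 (x y z w : Fin 3 → ℝ) :
    det3 x y z * det3 x y w =
      -(mink 2 x x * (mink 2 y y * mink 2 z w - mink 2 y w * mink 2 z y)
        - mink 2 x y * (mink 2 y x * mink 2 z w - mink 2 y w * mink 2 z x)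
        + mink 2 x w * (mink 2 y x * mink 2 z y - mink 2 y y * mink 2 z x)) := by
  simp only [mink_two, det3]; ring

theorem det3_mul_det3_of_isTang {A B u v : Fin 3 → ℝ} (hA : IsHyp 2 A) (hB : IsHyp 2 B)
    (hu : IsTang 2 A u) (hv : IsTang 2 B v) :
    det3 A B u * det3 A B v
      = (mink 2 A B ^ 2 - 1) * mink 2 u v - mink 2 A B * mink 2 A v * mink 2 u B := by
  rw [det3_mul_det3, hA.1, hB.1, show mink 2 B v = 0 from hv, mink_comm u A,
    show mink 2 A u = 0 from hu, mink_comm B A]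
  ring

theorem mink_eq_of_components {A B u v : Fin 3 → ℝ} (hA : IsHyp 2 A) (hB : IsHyp 2 B)
    (hu : IsTang 2 A u) (hv : IsTang 2 B v) (hs : sinh (hdist 2 A B) ≠ 0) {p q p' q' : ℝ}
    (huB : mink 2 u B = sinh (hdist 2 A B) * p) (hAv : mink 2 A v = -(sinh (hdist 2 A B) * q))
    (hABu : det3 A B u = sinh (hdist 2 A B) * p') (hABv : det3 A B v = sinh (hdist 2 A B) * q') :
    mink 2 u v = cosh (hdist 2 A B) * p * q + p' * q' := by
  have hG := det3_mul_det3_of_isTang hA hB hu hv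
  rw [huB, hAv, hABu, hABv, ← neg_neg (mink 2 A B), ← cosh_hdist hA hB] at hG
  apply mul_left_cancel₀ (pow_ne_zero 2 hs)
  linear_combination (-1 : ℝ) * hG - mink 2 u v * cosh_sq (hdist 2 A B)

theorem stmt3_general (A B u v : Fin 3 → ℝ)
    (hA : IsHyp 2 A) (hB : IsHyp 2 B) (hD : 0 < hdist 2 A B)
    (hu : IsTang 2 A u) (hv : IsTang 2 B v)
    (α β : ℝ)
    (hαc : tnorm 2 u * Real.cos α = mink 2 (hdir 2 A B) u)
    (hαs : tnorm 2 u * Real.sin α = det3 A (hdir 2 A B) u)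
    (hβc : tnorm 2 v * Real.cos β = -(mink 2 (hdir 2 B A) v))
    (hβs : tnorm 2 v * Real.sin β = -(det3 B (hdir 2 B A) v)) :
    deriv (deriv (fun t : ℝ =>
        (1/2) * (hdist 2 (hexp 2 A (t • u)) (hexp 2 B (t • v))) ^ 2)) 0
      = (tnorm 2 u * Real.cos α - tnorm 2 v * Real.cos β) ^ 2
        + ((tnorm 2 u) ^ 2 * (Real.sin α) ^ 2 + (tnorm 2 v) ^ 2 * (Real.sin β) ^ 2)
            * (hdist 2 A B * Real.tanh (hdist 2 A B / 2))
        + (tnorm 2 u * Real.sin α - tnorm 2 v * Real.sin β) ^ 2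
            * (hdist 2 A B * (Real.cosh (hdist 2 A B) / Real.sinh (hdist 2 A B))
                - hdist 2 A B * Real.tanh (hdist 2 A B / 2)) := by
  have hs : sinh (hdist 2 A B) ≠ 0 := (sinh_pos_iff.2 hD).ne'
  rw [mink_hdir_left B hu] at hαc
  rw [det3_hdir] at hαs
  rw [mink_hdir_left A hv, hdist_comm B A] at hβc
  rw [det3_hdir, hdist_comm B A, det3_swap] at hβs
  have huB : mink 2 u B = sinh (hdist 2 A B) * (tnorm 2 u * cos α) := by
    rw [mink_comm, hαc]; field_simp
  have hAv : mink 2 A v = -(sinh (hdist 2 A B) * (tnorm 2 v * cos β)) := by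
    rw [hβc]; field_simp
  have hABu : det3 A B u = sinh (hdist 2 A B) * (tnorm 2 u * sin α) := by
    rw [hαs]; field_simp
  have hABv : det3 A B v = sinh (hdist 2 A B) * (tnorm 2 v * sin β) := by
    rw [hβs]; field_simp
  have huv := mink_eq_of_components hA hB hu hv hs huB hAv hABu hABv
  rw [deriv_deriv_half_hdist_sq_hexp hA hB hu hv hD, huB, hAv, huv,
    tanh_half_eq_cosh_sub_one_div_sinh hD.ne']
  field_simp
  linear_combination -(hdist 2 A B * cosh (hdist 2 A B)) *
    (tnorm 2 u ^ 2 * sin_sq_add_cos_sq α + tnorm 2 v ^ 2 * sin_sq_add_cos_sq β)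

/-- (second derivative of `E(t) = ½ d(A_t,B_t)²`), with
`a = (‖u‖cos α - ‖v‖cos β)²`, `b = ‖u‖² sin²α + ‖v‖² sin²β`,
`c = (‖u‖sin α - ‖v‖sin β)²` and `D = d(A,B) > 0`. -/
theorem stmt3 (A B u v : Fin 3 → ℝ)
    (hA : IsHyp 2 A) (hB : IsHyp 2 B) (hAB : A ≠ B) (hD : 0 < hdist 2 A B)
    (hu : IsTang 2 A u) (hv : IsTang 2 B v)
    (α β : ℝ)
    (hαc : tnorm 2 u * Real.cos α = mink 2 (hdir 2 A B) u)
    (hαs : tnorm 2 u * Real.sin α = det3 A (hdir 2 A B) u)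
    (hβc : tnorm 2 v * Real.cos β = -(mink 2 (hdir 2 B A) v))
    (hβs : tnorm 2 v * Real.sin β = -(det3 B (hdir 2 B A) v)) :
    deriv (deriv (fun t : ℝ =>
        (1/2) * (hdist 2 (hexp 2 A (t • u)) (hexp 2 B (t • v))) ^ 2)) 0
      = (tnorm 2 u * Real.cos α - tnorm 2 v * Real.cos β) ^ 2
        + ((tnorm 2 u) ^ 2 * (Real.sin α) ^ 2 + (tnorm 2 v) ^ 2 * (Real.sin β) ^ 2)
            * (hdist 2 A B * Real.tanh (hdist 2 A B / 2))
        + (tnorm 2 u * Real.sin α - tnorm 2 v * Real.sin β) ^ 2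
            * (hdist 2 A B * (Real.cosh (hdist 2 A B) / Real.sinh (hdist 2 A B))
                - hdist 2 A B * Real.tanh (hdist 2 A B / 2)) :=
  stmt3_general A B u v hA hB hD hu hv α β hαc hαs hβc hβs
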